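/- arXiv:1610.00027 — 5 statements merged into one kernel-verified Lean document; each statement's English description precedes it below -/
import Mathlib

section
/- Let a, c, d be real numbers with d ≥ 0, and let √ denote the principal branch of the complex square root (nonnegative real part). Then Re √(c² - (a - di)²) ≥ d. -/
open Complex

/-- The principal branch of the complex square root (nonnegative real part). -/
noncomputable def csqrt (z : ℂ) : ℂ := z ^ (1 / 2 : ℂ)

/-
Since Re √z = √((‖z‖ + Re z) / 2), even |d| ≤ Re √z follows from 2d² - Re z ≤ ‖z‖.
For z = c² - (a - di)² we have Re z = c² - a² + d² and Im z = 2ad, and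
(2d² - Re z)² = ‖z‖² - 4c²d².
-/

theorem csqrt_re (z : ℂ) : (csqrt z).re = √((‖z‖ + z.re) / 2) := by
  rw [csqrt, one_div, cpow_inv_two_re]

theorem le_csqrt_re_of_sub_re_le_norm {z : ℂ} {d : ℝ} (h : 2 * d ^ 2 - z.re ≤ ‖z‖) :
    d ≤ (csqrt z).re := by
  rw [csqrt_re]
  exact (le_abs_self d).trans (Real.abs_le_sqrt (by linarith))

theorem sub_re_le_norm_sq_sub_sq (a c d : ℝ) :
    2 * d ^ 2 - ((c : ℂ) ^ 2 - ((a : ℂ) - d * I) ^ 2).re ≤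
      ‖(c : ℂ) ^ 2 - ((a : ℂ) - d * I) ^ 2‖ := by
  set z : ℂ := (c : ℂ) ^ 2 - ((a : ℂ) - d * I) ^ 2
  have hre : z.re = c ^ 2 - a ^ 2 + d ^ 2 := by simp [z, pow_two]; ring
  have him : z.im = 2 * a * d := by simp [z, pow_two]; ring
  rw [norm_def, normSq_apply, hre, him]
  refine (le_abs_self _).trans (Real.abs_le_sqrt ?_)
  nlinarith [sq_nonneg (c * d)]

theorem stmt_4_general (a c d : ℝ) :
    d ≤ (csqrt ((c : ℂ) ^ 2 - ((a : ℂ) - d * Complex.I) ^ 2)).re :=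
  le_csqrt_re_of_sub_re_le_norm (sub_re_le_norm_sq_sub_sq a c d)

theorem stmt_4 (a c d : ℝ) (hd : 0 ≤ d) :
    d ≤ (csqrt ((c : ℂ) ^ 2 - ((a : ℂ) - d * Complex.I) ^ 2)).re :=
  stmt_4_general a c d
end

section
/- Let τ, γ ∈ ℝ with γ > 0 and let η ∈ ℝ^{d-1}. Then Re √(|η|² - (τ - iγ)²) ≥ γ > 0; in particular |η|² - (τ - iγ)² is not a nonpositive real number and the principal square root has strictly positive real part. -/
open Complex

theorem le_csqrt_re {z : ℂ} {γ : ℝ} (h : 2 * γ ^ 2 - z.re ≤ ‖z‖) :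
    γ ≤ (csqrt z).re := by
  rw [csqrt_re]
  exact Real.le_sqrt_of_sq_le (by linarith)

theorem csqrt_ofReal_re_of_nonpos {r : ℝ} (hr : r ≤ 0) : (csqrt r).re = 0 := by
  rw [csqrt_re, norm_real, Real.norm_of_nonpos hr, ofReal_re, neg_add_cancel, zero_div,
    Real.sqrt_zero]

theorem two_mul_sq_sub_re_le_norm (a τ γ : ℝ) :
    2 * γ ^ 2 - ((a : ℂ) ^ 2 - (τ - γ * I) ^ 2).re ≤ ‖(a : ℂ) ^ 2 - (τ - γ * I) ^ 2‖ := by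
  set z : ℂ := (a : ℂ) ^ 2 - (τ - γ * I) ^ 2
  have hre : z.re = a ^ 2 - τ ^ 2 + γ ^ 2 := by simp [z, sq]; ring
  have him : z.im = 2 * τ * γ := by simp [z, sq]; ring
  have hgap : ‖z‖ ^ 2 - (2 * γ ^ 2 - z.re) ^ 2 = (2 * γ * a) ^ 2 := by
    rw [Complex.sq_norm, normSq_apply, hre, him]
    ring
  have hsq : (2 * γ ^ 2 - z.re) ^ 2 ≤ ‖z‖ ^ 2 := by
    linarith [sq_nonneg (2 * γ * a)]
  exact abs_le_of_sq_le_sq' hsq (norm_nonneg z) |>.2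

theorem stmt_5 {k : ℕ} (τ γ : ℝ) (hγ : 0 < γ) (η : EuclideanSpace ℝ (Fin k)) :
    γ ≤ (csqrt ((‖η‖ ^ 2 : ℂ) - ((τ : ℂ) - γ * Complex.I) ^ 2)).re ∧
    0 < (csqrt ((‖η‖ ^ 2 : ℂ) - ((τ : ℂ) - γ * Complex.I) ^ 2)).re ∧
    ¬ ∃ r : ℝ, r ≤ 0 ∧ (‖η‖ ^ 2 : ℂ) - ((τ : ℂ) - γ * Complex.I) ^ 2 = (r : ℂ) := by
  have hγz := le_csqrt_re (two_mul_sq_sub_re_le_norm ‖η‖ τ γ)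
  have hpos := hγ.trans_le hγz
  refine ⟨hγz, hpos, ?_⟩
  rintro ⟨r, hr, hzr⟩
  rw [hzr, csqrt_ofReal_re_of_nonpos hr] at hpos
  exact lt_irrefl 0 hpos
end

section
/- Let b ∈ ℝ^{d-1}, τ, γ ∈ ℝ with γ > 0, and η ∈ ℝ^{d-1}. Then |√(|η|² - (τ - iγ)²) + i(b·η)| ≥ γ, where √ denotes the principal square root and b·η is the real inner product. -/
open Complex
open scoped InnerProductSpace

theorem abs_le_re_csqrt {z : ℂ} {γ : ℝ} (h : 2 * γ ^ 2 ≤ ‖z‖ + z.re) :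
    |γ| ≤ (csqrt z).re := by
  rw [csqrt, one_div, cpow_inv_two_re]
  exact Real.abs_le_sqrt (by linarith)

/-- With `z = a² - (τ - iγ)²`, the square of `2γ² - Re z` falls short of `‖z‖²` by exactly `4a²γ²`. -/
theorem two_mul_sq_le_norm_add_re (a τ γ : ℝ) :
    2 * γ ^ 2 ≤ ‖(a : ℂ) ^ 2 - (τ - γ * I) ^ 2‖ + ((a : ℂ) ^ 2 - (τ - γ * I) ^ 2).re := by
  set z : ℂ := (a : ℂ) ^ 2 - (τ - γ * I) ^ 2
  have hre : z.re = a ^ 2 - τ ^ 2 + γ ^ 2 := by simp [z, pow_two]; ring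
  have him : z.im = 2 * τ * γ := by simp [z, pow_two]; ring
  have hsq : (2 * γ ^ 2 - z.re) ^ 2 ≤ ‖z‖ ^ 2 := by
    rw [Complex.sq_norm, normSq_apply, hre, him]
    nlinarith [sq_nonneg (a * γ)]
  linarith [(abs_le_of_sq_le_sq' hsq (norm_nonneg z)).2]

theorem stmt_6_general {k : ℕ} (b η : EuclideanSpace ℝ (Fin k)) (τ γ : ℝ) :
    γ ≤ Norm.norm
      (csqrt ((‖η‖ ^ 2 : ℂ) - ((τ : ℂ) - γ * Complex.I) ^ 2)
        + Complex.I * (⟪b, η⟫_ℝ : ℂ)) :=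
  calc γ ≤ |γ| := le_abs_self γ
    _ ≤ (csqrt ((‖η‖ ^ 2 : ℂ) - ((τ : ℂ) - γ * Complex.I) ^ 2)).re :=
      abs_le_re_csqrt (two_mul_sq_le_norm_add_re ‖η‖ τ γ)
    _ = (csqrt ((‖η‖ ^ 2 : ℂ) - ((τ : ℂ) - γ * Complex.I) ^ 2)
        + Complex.I * (⟪b, η⟫_ℝ : ℂ)).re := by simp
    _ ≤ _ := re_le_norm _

theorem stmt_6 {k : ℕ} (b η : EuclideanSpace ℝ (Fin k)) (τ γ : ℝ) (hγ : 0 < γ) :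
    γ ≤ Norm.norm
      (csqrt ((‖η‖ ^ 2 : ℂ) - ((τ : ℂ) - γ * Complex.I) ^ 2)
        + Complex.I * (⟪b, η⟫_ℝ : ℂ)) :=
  stmt_6_general b η τ γ
end

section
/- Let τ, γ ∈ ℝ with γ > 0, m ≥ 0, ε, μ > 0, and suppose τ² + m + γ² = 1. Set ξ with |ξ|² = |m - εμ(τ - iγ)²|. Then for all α, β ∈ ℂ with |α|² + |β|² = 1 there is a constant c > 0 (depending only on ε, μ) with |α|² μ²(τ² + γ²) + |β|² |ξ|² ≥ c γ², and moreover τ² + γ² + |ξ|² is bounded above and below by positive constants depending only on ε, μ. -/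
/-!
Write `z = τ - iγ`, `e = εμ` and `t = √(m / e)`. Then `m - e z² = e (t - z)(t + z)`, and both
factors have imaginary part `∓γ`, so `|ξ|² ≥ e γ²`; together with `μ² (τ² + γ²) ≥ μ² γ²` this gives
the first estimate with `c = min (μ², e)`. The triangle inequality gives
`m - e |z|² ≤ |ξ|² ≤ m + e |z|²`, and since `|z|² + m = 1` this yields
`1 / (1 + e) ≤ |z|² + |ξ|² ≤ 1 + e`.
-/

open Complex

lemma sq_im_le_norm_ofReal_sq_sub_sq (t : ℝ) (z : ℂ) : z.im ^ 2 ≤ ‖(t : ℂ) ^ 2 - z ^ 2‖ := by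
  have hsub : |z.im| ≤ ‖(t : ℂ) - z‖ := by simpa using abs_im_le_norm ((t : ℂ) - z)
  have hadd : |z.im| ≤ ‖(t : ℂ) + z‖ := by simpa using abs_im_le_norm ((t : ℂ) + z)
  calc z.im ^ 2 = |z.im| * |z.im| := by rw [← sq, sq_abs]
    _ ≤ ‖(t : ℂ) - z‖ * ‖(t : ℂ) + z‖ := mul_le_mul hsub hadd (abs_nonneg _) (norm_nonneg _)
    _ = ‖(t : ℂ) ^ 2 - z ^ 2‖ := by rw [← norm_mul]; ring_nf

lemma mul_sq_im_le_norm_sub_mul_sq {m e : ℝ} (hm : 0 ≤ m) (he : 0 < e) (z : ℂ) :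
    e * z.im ^ 2 ≤ ‖(m : ℂ) - e * z ^ 2‖ := by
  have hfactor : (m : ℂ) - e * z ^ 2 = e * ((√(m / e) : ℝ) ^ 2 - z ^ 2) := by
    rw [← ofReal_pow, Real.sq_sqrt (div_nonneg hm he.le), ofReal_div]
    field_simp [he.ne']
  rw [hfactor, norm_mul, norm_real, Real.norm_of_nonneg he.le]
  exact mul_le_mul_of_nonneg_left (sq_im_le_norm_ofReal_sq_sub_sq _ z) he.le

lemma norm_sub_mul_sq_le {m e : ℝ} (hm : 0 ≤ m) (he : 0 ≤ e) (z : ℂ) :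
    ‖(m : ℂ) - e * z ^ 2‖ ≤ m + e * ‖z‖ ^ 2 := by
  calc ‖(m : ℂ) - e * z ^ 2‖ ≤ ‖(m : ℂ)‖ + ‖(e : ℂ) * z ^ 2‖ := norm_sub_le _ _
    _ = m + e * ‖z‖ ^ 2 := by
      rw [norm_mul, norm_pow, norm_real, norm_real, Real.norm_of_nonneg hm,
        Real.norm_of_nonneg he]

lemma sub_mul_sq_norm_le_norm_sub_mul_sq (m : ℝ) {e : ℝ} (he : 0 ≤ e) (z : ℂ) :
    m - e * ‖z‖ ^ 2 ≤ ‖(m : ℂ) - e * z ^ 2‖ := by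
  calc m - e * ‖z‖ ^ 2 ≤ ‖(m : ℂ)‖ - ‖(e : ℂ) * z ^ 2‖ := by
        rw [norm_mul, norm_pow, norm_real, norm_real, Real.norm_of_nonneg he]
        gcongr
        exact Real.le_norm_self m
    _ ≤ ‖(m : ℂ) - e * z ^ 2‖ := norm_sub_norm_le _ _

lemma sq_norm_ofReal_sub_ofReal_mul_I (τ γ : ℝ) : ‖(τ : ℂ) - γ * I‖ ^ 2 = τ ^ 2 + γ ^ 2 := by
  rw [← normSq_eq_norm_sq, normSq_apply]
  simp only [sub_re, sub_im, mul_re, mul_im, ofReal_re, ofReal_im, I_re, I_im]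
  ring

theorem stmt_15 (ε μ : ℝ) (hε : 0 < ε) (hμ : 0 < μ) :
    ∃ c C₁ C₂ : ℝ, 0 < c ∧ 0 < C₁ ∧ 0 < C₂ ∧
      ∀ τ γ m : ℝ, 0 < γ → 0 ≤ m → τ ^ 2 + m + γ ^ 2 = 1 →
        (∀ α β : ℂ, ‖α‖ ^ 2 + ‖β‖ ^ 2 = 1 →
          c * γ ^ 2 ≤ ‖α‖ ^ 2 * μ ^ 2 * (τ ^ 2 + γ ^ 2)
            + ‖β‖ ^ 2 *
              ‖(m : ℂ) - (ε : ℂ) * μ * ((τ : ℂ) - γ * Complex.I) ^ 2‖) ∧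
        C₁ ≤ τ ^ 2 + γ ^ 2
            + ‖(m : ℂ) - (ε : ℂ) * μ * ((τ : ℂ) - γ * Complex.I) ^ 2‖ ∧
        τ ^ 2 + γ ^ 2
            + ‖(m : ℂ) - (ε : ℂ) * μ * ((τ : ℂ) - γ * Complex.I) ^ 2‖ ≤ C₂ := by
  set e := ε * μ
  have he : 0 < e := mul_pos hε hμ
  refine ⟨min (μ ^ 2) e, 1 / (1 + e), 1 + e, by positivity, by positivity, by positivity, ?_⟩
  intro τ γ m _ hm hsum
  set z : ℂ := τ - γ * I
  have hz : ‖z‖ ^ 2 = τ ^ 2 + γ ^ 2 := sq_norm_ofReal_sub_ofReal_mul_I τ γ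
  have hzim : z.im ^ 2 = γ ^ 2 := by simp [z]
  rw [show (m : ℂ) - ε * μ * z ^ 2 = m - (e : ℝ) * z ^ 2 by push_cast [e]; ring]
  have hlow := mul_sq_im_le_norm_sub_mul_sq hm he z
  have hup := norm_sub_mul_sq_le hm he.le z
  have hrev := sub_mul_sq_norm_le_norm_sub_mul_sq m he.le z
  rw [hzim] at hlow
  rw [hz] at hup hrev
  refine ⟨fun α β hαβ => ?_, ?_, by nlinarith⟩
  · have hα : min (μ ^ 2) e * γ ^ 2 ≤ μ ^ 2 * (τ ^ 2 + γ ^ 2) := by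
      gcongr
      · exact min_le_left _ _
      · nlinarith
    have hβ : min (μ ^ 2) e * γ ^ 2 ≤ ‖(m : ℂ) - (e : ℝ) * z ^ 2‖ :=
      (mul_le_mul_of_nonneg_right (min_le_right _ _) (sq_nonneg γ)).trans hlow
    calc min (μ ^ 2) e * γ ^ 2
        = ‖α‖ ^ 2 * (min (μ ^ 2) e * γ ^ 2) + ‖β‖ ^ 2 * (min (μ ^ 2) e * γ ^ 2) := by
          rw [← add_mul, hαβ, one_mul]
      _ ≤ ‖α‖ ^ 2 * (μ ^ 2 * (τ ^ 2 + γ ^ 2)) + ‖β‖ ^ 2 * ‖(m : ℂ) - (e : ℝ) * z ^ 2‖ := by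
          gcongr
      _ = _ := by ring
  · rw [div_le_iff₀ (by positivity)]
    nlinarith [norm_nonneg ((m : ℂ) - (e : ℝ) * z ^ 2), sq_nonneg τ, sq_nonneg γ]
end

section
/- Let τ, γ ∈ ℝ with γ > 0, let A⁰, …, A^d be N×N Hermitian matrices with A⁰ = I, let η ∈ ℝ^{d-1}, and set G = -i(I(τ - iγ) + Σ_{j<d} Aʲηⱼ). Suppose U : [0,∞) → ℂᴺ is C¹ with U, U' ∈ L², U(∞) = 0, and A^d U'(x) = G U(x) + f(x) for all x ≥ 0 with f ∈ L². Then γ ∫₀^∞ |U|² dx ≤ Re ∫₀^∞ ⟨f(x), U(x)⟩ dx + ½ ⟨A^d U(0), U(0)⟩. -/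
open MeasureTheory Complex
open scoped InnerProductSpace

/-! Energy method: `E(x) = Re ⟪A^d U(x), U(x)⟫` has derivative `2 Re ⟪A^d U', U⟫ = 2 Re ⟪G U + f, U⟫`
since `A^d` is Hermitian, and `Re ⟪G v, v⟫ = -γ ‖v‖²` since `G + γ` is skew-Hermitian. Integrating
`E'` over `(0, ∞)` with `E(∞) = 0` yields the estimate, in fact with equality. -/

section
variable {𝕜 E : Type*} [RCLike 𝕜] [NormedAddCommGroup E] [InnerProductSpace 𝕜 E]

theorem MeasureTheory.MemLp.integrable_inner {α : Type*} [MeasurableSpace α] {μ : Measure α}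
    {f g : α → E} (hf : MemLp f 2 μ) (hg : MemLp g 2 μ) :
    Integrable (fun x => ⟪f x, g x⟫_𝕜) μ :=
  (L2.integrable_inner (hf.toLp f) (hg.toLp g)).congr <| by
    filter_upwards [hf.coeFn_toLp, hg.coeFn_toLp] with x hfx hgx
    rw [hfx, hgx]

theorem HasDerivAt.re_inner_apply_self [NormedSpace ℝ E] [IsScalarTower ℝ 𝕜 E]
    {T : E →L[𝕜] E} (hT : (T : E →ₗ[𝕜] E).IsSymmetric) {u : ℝ → E} {u' : E} {x : ℝ}
    (hu : HasDerivAt u u' x) :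
    HasDerivAt (fun t => RCLike.re ⟪T (u t), u t⟫_𝕜) (2 * RCLike.re ⟪T u', u x⟫_𝕜) x := by
  have hTu : HasDerivAt (fun t => T (u t)) (T u') x :=
    (T.restrictScalars ℝ).hasFDerivAt.comp_hasDerivAt x hu
  have hsymm : RCLike.re ⟪T (u x), u'⟫_𝕜 = RCLike.re ⟪T u', u x⟫_𝕜 := by
    rw [← inner_re_symm]
    exact congrArg _ (hT u' (u x)).symm
  have h : HasDerivAt (fun t => RCLike.re ⟪T (u t), u t⟫_𝕜)
      (RCLike.re (⟪T (u x), u'⟫_𝕜 + ⟪T u', u x⟫_𝕜)) x :=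
    (RCLike.reCLM (K := 𝕜)).hasFDerivAt.comp_hasDerivAt x (hTu.inner 𝕜 hu)
  rwa [map_add, hsymm, ← two_mul] at h
end

theorem LinearMap.IsSymmetric.re_inner_neg_I_smul_add_self {E : Type*} [NormedAddCommGroup E]
    [InnerProductSpace ℂ E] {S : E →ₗ[ℂ] E} (hS : S.IsSymmetric) (z : ℂ) (v : E) :
    (⟪(-I) • (z • v + S v), v⟫_ℂ).re = z.im * ‖v‖ ^ 2 := by
  rw [inner_smul_left, inner_add_left, inner_smul_left, inner_self_eq_norm_sq_to_K]
  have him : (⟪S v, v⟫_ℂ).im = 0 := hS.im_inner_apply_self v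
  simp [Complex.mul_re, him, ← ofReal_pow]

theorem Matrix.IsHermitian.re_inner_toEuclideanLin_neg_I_smul {n : Type*} [Fintype n]
    [DecidableEq n] {H : Matrix n n ℂ} (hH : H.IsHermitian) (z : ℂ) (v : EuclideanSpace ℂ n) :
    (⟪Matrix.toEuclideanLin ((-I) • (z • 1 + H)) v, v⟫_ℂ).re = z.im * ‖v‖ ^ 2 := by
  have hG : Matrix.toEuclideanLin ((-I) • (z • 1 + H)) v
      = (-I) • (z • v + Matrix.toEuclideanLin H v) := by
    simp
  rw [hG]
  exact (Matrix.isSymmetric_toEuclideanLin_iff.mpr hH).re_inner_neg_I_smul_add_self z v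

theorem stmt_19_general {N k : ℕ} (τ γ : ℝ)
    (Atang : Fin k → Matrix (Fin N) (Fin N) ℂ) (Ad : Matrix (Fin N) (Fin N) ℂ)
    (hAtang : ∀ j, (Atang j).IsHermitian) (hAd : Ad.IsHermitian)
    (η : Fin k → ℝ)
    (U U' f : ℝ → EuclideanSpace ℂ (Fin N))
    (hderiv : ∀ x ∈ Set.Ici (0 : ℝ), HasDerivAt U (U' x) x)
    (hU : MemLp U 2 (volume.restrict (Set.Ici (0 : ℝ))))
    (hf : MemLp f 2 (volume.restrict (Set.Ici (0 : ℝ))))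
    (hlim : Filter.Tendsto U Filter.atTop (nhds 0))
    (hODE : ∀ x ∈ Set.Ici (0 : ℝ),
      Matrix.toEuclideanLin Ad (U' x)
        = Matrix.toEuclideanLin
            ((-Complex.I) • ((((τ : ℂ) - γ * Complex.I)) • (1 : Matrix (Fin N) (Fin N) ℂ)
              + ∑ j, (η j : ℂ) • Atang j)) (U x) + f x) :
    γ * ∫ x in Set.Ioi (0 : ℝ), ‖U x‖ ^ 2
      ≤ (∫ x in Set.Ioi (0 : ℝ), (⟪f x, U x⟫_ℂ).re)
        + (1 / 2) * (⟪Matrix.toEuclideanLin Ad (U 0), U 0⟫_ℂ).re := by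
  have hH : (∑ j, (η j : ℂ) • Atang j).IsHermitian :=
    isSelfAdjoint_sum _ fun j _ => (hAtang j).smul (conj_ofReal (η j))
  set T := (Matrix.toEuclideanLin Ad).toContinuousLinearMap
  have hT : (T : EuclideanSpace ℂ (Fin N) →ₗ[ℂ] _).IsSymmetric :=
    Matrix.isSymmetric_toEuclideanLin_iff.mpr hAd
  have hEnergy : ∀ x ∈ Set.Ici (0 : ℝ), HasDerivAt (fun t => (⟪T (U t), U t⟫_ℂ).re)
      (-(2 * γ) * ‖U x‖ ^ 2 + 2 * (⟪f x, U x⟫_ℂ).re) x := by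
    intro x hx
    refine ((hderiv x hx).re_inner_apply_self hT).congr_deriv ?_
    rw [RCLike.re_to_complex, LinearMap.coe_toContinuousLinearMap', hODE x hx, inner_add_left,
      add_re, hH.re_inner_toEuclideanLin_neg_I_smul]
    simp only [sub_im, ofReal_im, mul_im, ofReal_re, I_re, I_im]
    ring
  have hU2 : IntegrableOn (fun x => ‖U x‖ ^ 2) (Set.Ioi 0) :=
    IntegrableOn.mono_set (hU.integrable_norm_pow two_ne_zero) Set.Ioi_subset_Ici_self
  have hfU : IntegrableOn (fun x => (⟪f x, U x⟫_ℂ).re) (Set.Ioi 0) :=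
    IntegrableOn.mono_set (hf.integrable_inner (𝕜 := ℂ) hU).re Set.Ioi_subset_Ici_self
  have hT0 : Filter.Tendsto (fun t => (⟪T (U t), U t⟫_ℂ).re) Filter.atTop (nhds 0) := by
    simpa [Function.comp_def] using
      ((by fun_prop : Continuous fun v => (⟪T v, v⟫_ℂ).re).tendsto 0).comp hlim
  have hEnergyIdentity := integral_Ioi_of_hasDerivAt_of_tendsto' hEnergy
    ((hU2.const_mul _).add (hfU.const_mul _)) hT0
  rw [integral_add (hU2.const_mul _) (hfU.const_mul _), integral_const_mul,
    integral_const_mul] at hEnergyIdentity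
  simp only [T, LinearMap.coe_toContinuousLinearMap'] at hEnergyIdentity
  linarith

theorem stmt_19 {N k : ℕ} (τ γ : ℝ) (hγ : 0 < γ)
    (Atang : Fin k → Matrix (Fin N) (Fin N) ℂ) (Ad : Matrix (Fin N) (Fin N) ℂ)
    (hAtang : ∀ j, (Atang j).IsHermitian) (hAd : Ad.IsHermitian)
    (η : Fin k → ℝ)
    (U U' f : ℝ → EuclideanSpace ℂ (Fin N))
    (hderiv : ∀ x ∈ Set.Ici (0 : ℝ), HasDerivAt U (U' x) x)
    (hcont : ContinuousOn U' (Set.Ici (0 : ℝ)))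
    (hU : MemLp U 2 (volume.restrict (Set.Ici (0 : ℝ))))
    (hU' : MemLp U' 2 (volume.restrict (Set.Ici (0 : ℝ))))
    (hf : MemLp f 2 (volume.restrict (Set.Ici (0 : ℝ))))
    (hlim : Filter.Tendsto U Filter.atTop (nhds 0))
    (hODE : ∀ x ∈ Set.Ici (0 : ℝ),
      Matrix.toEuclideanLin Ad (U' x)
        = Matrix.toEuclideanLin
            ((-Complex.I) • ((((τ : ℂ) - γ * Complex.I)) • (1 : Matrix (Fin N) (Fin N) ℂ)
              + ∑ j, (η j : ℂ) • Atang j)) (U x) + f x) :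
    γ * ∫ x in Set.Ioi (0 : ℝ), ‖U x‖ ^ 2
      ≤ (∫ x in Set.Ioi (0 : ℝ), (⟪f x, U x⟫_ℂ).re)
        + (1 / 2) * (⟪Matrix.toEuclideanLin Ad (U 0), U 0⟫_ℂ).re :=
  stmt_19_general τ γ Atang Ad hAtang hAd η U U' f hderiv hU hf hlim hODE
end
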